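/- The formal power series (1+q^2)/((1−q^3)(1−q^7)) − q^3/((1−q^3)(1−q^5)) equals 1/((1−q^5)(1−q^7)) + q^2/(1−q^7), and in particular has nonnegative coefficients. -/

import Mathlib

open PowerSeries

noncomputable def G (d : ℕ) : PowerSeries ℝ :=
  PowerSeries.mk fun n => if d ∣ n then 1 else 0

lemma G_mul (d : ℕ) (hd : 0 < d) : (1 - X ^ d) * G d = 1 := by
  ext n
  rw [sub_mul, one_mul, map_sub, coeff_X_pow_mul']
  simp only [G, coeff_mk, coeff_one]
  rcases Nat.eq_zero_or_pos n with rfl | hn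
  · simp [hd.ne']
  · rw [if_neg hn.ne']
    by_cases h : d ≤ n
    · rw [if_pos h]
      have : d ∣ n ↔ d ∣ n - d := by
        constructor
        · exact fun h' => (Nat.dvd_sub h' dvd_rfl)
        · intro h'
          have := Nat.dvd_add h' (dvd_refl d)
          rwa [Nat.sub_add_cancel h] at this
      by_cases hdn : d ∣ n
      · rw [if_pos hdn, if_pos (this.mp hdn)]; ring
      · rw [if_neg hdn, if_neg (fun hh => hdn (this.mpr hh))]; ring
    · rw [if_neg h]
      have hdn : ¬ d ∣ n := fun hh => h (Nat.le_of_dvd hn hh)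
      rw [if_neg hdn]; ring

lemma G_nonneg (d n : ℕ) : 0 ≤ coeff n (G d) := by
  simp only [G, coeff_mk]; split <;> norm_num

lemma ne_zero_one_sub_X_pow (d : ℕ) (hd : 0 < d) : (1 - X ^ d : PowerSeries ℝ) ≠ 0 := by
  intro h
  have := congrArg (constantCoeff) h
  simp [hd.ne'] at this

lemma inv_eq_G (d : ℕ) (hd : 0 < d) : (1 - X ^ d : PowerSeries ℝ)⁻¹ = G d := by
  have hc : constantCoeff (1 - X ^ d : PowerSeries ℝ) ≠ 0 := by simp [hd.ne']
  have h1 : (1 - X ^ d : PowerSeries ℝ) * (1 - X ^ d)⁻¹ = 1 :=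
    PowerSeries.mul_inv_cancel _ hc
  have h2 := G_mul d hd
  exact mul_left_cancel₀ (ne_zero_one_sub_X_pow d hd) (h1.trans h2.symm)

/-- The series `(1+q^2)/((1−q^3)(1−q^7)) − q^3/((1−q^3)(1−q^5))`. -/
noncomputable def A : PowerSeries ℝ :=
  (1 + X ^ 2) * ((1 - X ^ 3)⁻¹ * (1 - X ^ 7)⁻¹) - X ^ 3 * ((1 - X ^ 3)⁻¹ * (1 - X ^ 5)⁻¹)

lemma A_eq : A = (1 - X ^ 5)⁻¹ * (1 - X ^ 7)⁻¹ + X ^ 2 * (1 - X ^ 7 : PowerSeries ℝ)⁻¹ := by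
  have h3 : (1 - X ^ 3 : PowerSeries ℝ) * (1 - X ^ 3)⁻¹ = 1 :=
    PowerSeries.mul_inv_cancel _ (by simp)
  have h5 : (1 - X ^ 5 : PowerSeries ℝ) * (1 - X ^ 5)⁻¹ = 1 :=
    PowerSeries.mul_inv_cancel _ (by simp)
  have h7 : (1 - X ^ 7 : PowerSeries ℝ) * (1 - X ^ 7)⁻¹ = 1 :=
    PowerSeries.mul_inv_cancel _ (by simp)
  have habc : ((1 - X ^ 3) * (1 - X ^ 5) * (1 - X ^ 7) : PowerSeries ℝ) ≠ 0 :=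
    mul_ne_zero (mul_ne_zero (ne_zero_one_sub_X_pow 3 (by norm_num))
      (ne_zero_one_sub_X_pow 5 (by norm_num))) (ne_zero_one_sub_X_pow 7 (by norm_num))
  apply mul_right_cancel₀ habc
  have e1 : A * ((1 - X ^ 3) * (1 - X ^ 5) * (1 - X ^ 7)) =
      (1 + X ^ 2) * (1 - X ^ 5) * (((1 - X ^ 3) * (1 - X ^ 3)⁻¹) * ((1 - X ^ 7) * (1 - X ^ 7)⁻¹))
      - X ^ 3 * (1 - X ^ 7) * (((1 - X ^ 3) * (1 - X ^ 3)⁻¹) * ((1 - X ^ 5) * (1 - X ^ 5)⁻¹)) := by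
    unfold A; ring
  have e2 : ((1 - X ^ 5)⁻¹ * (1 - X ^ 7)⁻¹ + X ^ 2 * (1 - X ^ 7)⁻¹ : PowerSeries ℝ) *
      ((1 - X ^ 3) * (1 - X ^ 5) * (1 - X ^ 7)) =
      (1 - X ^ 3) * (((1 - X ^ 5) * (1 - X ^ 5)⁻¹) * ((1 - X ^ 7) * (1 - X ^ 7)⁻¹))
      + X ^ 2 * (1 - X ^ 3) * (1 - X ^ 5) * ((1 - X ^ 7) * (1 - X ^ 7)⁻¹) := by
    ring
  rw [e1, e2, h3, h5, h7]
  ring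

/-- `A` equals `1/((1−q^5)(1−q^7)) + q^2/(1−q^7)` and has nonnegative coefficients. -/
theorem stmt14 :
    A = (1 - X ^ 5)⁻¹ * (1 - X ^ 7)⁻¹ + X ^ 2 * (1 - X ^ 7)⁻¹ ∧
      ∀ n : ℕ, 0 ≤ PowerSeries.coeff n A := by
  refine ⟨A_eq, fun n => ?_⟩
  rw [A_eq, inv_eq_G 5 (by norm_num), inv_eq_G 7 (by norm_num), map_add]
  have h1 : 0 ≤ coeff n (G 5 * G 7) := by
    rw [coeff_mul]
    exact Finset.sum_nonneg fun p _ => mul_nonneg (G_nonneg 5 p.1) (G_nonneg 7 p.2)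
  have h2 : 0 ≤ coeff n (X ^ 2 * G 7) := by
    rw [coeff_X_pow_mul']
    split
    · exact G_nonneg 7 _
    · exact le_refl 0
  exact add_nonneg h1 h2
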